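/- Every group elementarily equivalent to a nonabelian free group contains a free subgroup of rank 2; in particular it is nonabelian. -/

import Mathlib

open FirstOrder Language

/-- Function symbols of the first-order language of groups:
binary multiplication, unary inverse, and a constant for the identity. -/
inductive GroupFunc : ℕ → Type
  | mul : GroupFunc 2
  | inv : GroupFunc 1
  | one : GroupFunc 0

/-- The first-order language of groups. -/
def Lgroup : FirstOrder.Language := ⟨GroupFunc, fun _ => Empty⟩

/-- Every group is a structure in the language of groups. -/
noncomputable instance (G : Type*) [Group G] : Lgroup.Structure G where
  funMap := fun f v =>
    match f with
    | .mul => v 0 * v 1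
    | .inv => (v 0)⁻¹
    | .one => 1
  RelMap := fun r => r.elim

/-- A universal sentence is one of the form `∀ x₁ ... ∀ xₙ, φ` with `φ` quantifier-free. -/
def IsUniversalSentence (σ : Lgroup.Sentence) : Prop :=
  ∃ (n : ℕ) (φ : Lgroup.BoundedFormula Empty n), φ.IsQF ∧ σ = φ.alls

/-!
Two non-commuting elements `x, y` of a free group generate a free subgroup of rank two.
Indeed `H = ⟨x, y⟩` is free by Nielsen–Schreier, on at least two generators since it is not
abelian, so there are surjections `F₂ ↠ H ↠ F₂`; their composite is injective because `F₂` is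
Hopfian, being finitely generated and residually finite (Sanov's ping-pong embeds it in
`SL(2, ℤ)`, which is residually finite through its congruence quotients). Hence every nontrivial
word `w` makes the universal sentence `∀ x y, w(x, y) = 1 → x y = y x` true in a nonabelian free
group, and so in `M`; there it forbids every relation between the two elements of a
non-commuting pair, which `M` has because it satisfies `∃ x y, x y ≠ y x`.
-/

namespace Group

variable {G H : Type*} [Group G] [Group H]

theorem ResiduallyFinite.of_injective [ResiduallyFinite H] {f : G →* H}
    (hf : Function.Injective f) : ResiduallyFinite G := by
  refine residuallyFinite_of_forall_exists_finite_monoidHom fun g hg => ?_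
  obtain ⟨K, hgK⟩ := exists_finiteIndexNormalSubgroup_notMem (f g) ((map_ne_one_iff f hf).mpr hg)
  exact ⟨_, inferInstance, inferInstance, (QuotientGroup.mk' K.toSubgroup).comp f,
    by simpa [QuotientGroup.eq_one_iff, FiniteIndexNormalSubgroup.mem_toSubgroup_iff] using hgK⟩

theorem finite_monoidHom_of_fg [FG G] [Finite H] : Finite (G →* H) := by
  obtain ⟨S, hS, hSfin⟩ := fg_iff.mp ‹FG G›
  have := hSfin.to_subtype
  refine Finite.of_injective (fun f : G →* H => fun s : S => f s) fun f₁ f₂ h => ?_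
  exact MonoidHom.eq_of_eqOn_dense hS fun s hs => congrFun h ⟨s, hs⟩

theorem ResiduallyFinite.injective_of_surjective [FG G] [ResiduallyFinite G] {f : G →* G}
    (hf : Function.Surjective f) : Function.Injective f := by
  refine (injective_iff_map_eq_one f).mpr fun g hg => by_contra fun hg1 => ?_
  obtain ⟨K, hgK⟩ := exists_finiteIndexNormalSubgroup_notMem g hg1
  have := finite_monoidHom_of_fg (G := G) (H := G ⧸ K.toSubgroup)
  have hcomp : Function.Injective fun ψ : G →* G ⧸ K.toSubgroup => ψ.comp f :=
    fun ψ₁ ψ₂ h => MonoidHom.ext fun x => by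
      obtain ⟨y, rfl⟩ := hf x
      exact DFunLike.congr_fun h y
  obtain ⟨ψ, hψ⟩ := Finite.surjective_of_injective hcomp (QuotientGroup.mk' K.toSubgroup)
  apply hgK
  rw [← FiniteIndexNormalSubgroup.mem_toSubgroup_iff, ← QuotientGroup.eq_one_iff,
    ← QuotientGroup.mk'_apply, ← hψ, MonoidHom.comp_apply, hg, map_one]

end Group

namespace Matrix.SpecialLinearGroup

variable {n : Type*} [Fintype n] [DecidableEq n]

instance residuallyFinite_int : Group.ResiduallyFinite (SpecialLinearGroup n ℤ) := by
  refine Group.residuallyFinite_of_forall_exists_finite_monoidHom fun g hg => ?_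
  obtain ⟨i, j, hij⟩ : ∃ i j, g i j ≠ (1 : SpecialLinearGroup n ℤ) i j := by
    by_contra! h
    exact hg (ext _ _ h)
  set d := g i j - (1 : SpecialLinearGroup n ℤ) i j
  have hd : d ≠ 0 := sub_ne_zero.mpr hij
  set m := d.natAbs + 1
  have : NeZero m := ⟨Nat.succ_ne_zero _⟩
  refine ⟨_, inferInstance, inferInstance, map (Int.castRingHom (ZMod m)), fun h => hd ?_⟩
  have hdm : (d : ZMod m) = 0 := by
    have hg1 := congrArg (fun A : SpecialLinearGroup n (ZMod m) => A i j)
      (h.trans (map_one (map (Int.castRingHom (ZMod m)))).symm)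
    simp only [map_apply_coe, RingHom.mapMatrix_apply, Matrix.map_apply] at hg1
    rw [Int.cast_sub, sub_eq_zero]
    simpa using hg1
  refine Int.eq_zero_of_abs_lt_dvd ((ZMod.intCast_zmod_eq_zero_iff_dvd d m).mp hdm) ?_
  simp only [m, Int.abs_eq_natAbs]
  omega

end Matrix.SpecialLinearGroup

def SubMulAction.nonzero (G M : Type*) [Group G] [AddMonoid M] [DistribMulAction G M] :
    SubMulAction G M where
  carrier := {v | v ≠ 0}
  smul_mem' g _ hv := (smul_ne_zero_iff_ne g).mpr hv

@[simp]
lemma SubMulAction.mem_nonzero {G M : Type*} [Group G] [AddMonoid M] [DistribMulAction G M]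
    {v : M} : v ∈ SubMulAction.nonzero G M ↔ v ≠ 0 := Iff.rfl

namespace Sanov

open Matrix
open scoped MatrixGroups

def gen (i : Bool) : SL(2, ℤ) :=
  if i then ⟨!![1, 3; 0, 1], by norm_num [det_fin_two_of]⟩
  else ⟨!![1, 0; 3, 1], by norm_num [det_fin_two_of]⟩

def lead (i : Bool) (v : Fin 2 → ℤ) : ℤ := if i then v 0 else v 1
def trail (i : Bool) (v : Fin 2 → ℤ) : ℤ := if i then v 1 else v 0

lemma coe_gen (i : Bool) :
    (gen i : Matrix (Fin 2) (Fin 2) ℤ) = if i then !![1, 3; 0, 1] else !![1, 0; 3, 1] := by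
  cases i <;> rfl

lemma gen_smul (i : Bool) (v : Fin 2 → ℤ) :
    gen i • v = (gen i : Matrix (Fin 2) (Fin 2) ℤ) *ᵥ v :=
  rfl

lemma gen_inv_smul (i : Bool) (v : Fin 2 → ℤ) :
    (gen i)⁻¹ • v = adjugate (gen i : Matrix (Fin 2) (Fin 2) ℤ) *ᵥ v :=
  rfl

lemma lead_gen_smul (i : Bool) (v : Fin 2 → ℤ) :
    lead i (gen i • v) = lead i v + 3 * trail i v := by
  cases i <;> simp [gen_smul, coe_gen, lead, trail, vecHead, vecTail]; ring

lemma trail_gen_smul (i : Bool) (v : Fin 2 → ℤ) :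
    trail i (gen i • v) = trail i v := by
  cases i <;> simp [gen_smul, coe_gen, trail, vecHead, vecTail]

lemma lead_gen_inv_smul (i : Bool) (v : Fin 2 → ℤ) :
    lead i ((gen i)⁻¹ • v) = lead i v - 3 * trail i v := by
  cases i <;> simp [gen_inv_smul, coe_gen, lead, trail, adjugate_fin_two_of, vecHead, vecTail] <;>
    ring

lemma trail_gen_inv_smul (i : Bool) (v : Fin 2 → ℤ) :
    trail i ((gen i)⁻¹ • v) = trail i v := by
  cases i <;> simp [gen_inv_smul, coe_gen, trail, adjugate_fin_two_of, vecHead, vecTail]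

lemma lead_ne_zero_or_trail_ne_zero (i : Bool) {v : Fin 2 → ℤ} (hv : v ≠ 0) :
    lead i v ≠ 0 ∨ trail i v ≠ 0 := by
  contrapose! hv
  ext k
  fin_cases k <;> cases i <;> simp_all [lead, trail]

lemma not_dominant_and_dominant {i j : Bool} (hij : i ≠ j) (v : Fin 2 → ℤ) :
    ¬(|trail i v| < |lead i v| ∧ |trail j v| < |lead j v|) := by
  cases i <;> cases j <;> simp_all [lead, trail, lt_asymm]

-- With `2` in place of `3` (Sanov's matrices) this fails at `x = -y`.
lemma abs_lt_abs_add_three_mul {x y : ℤ} (h0 : x ≠ 0 ∨ y ≠ 0) (h : ¬(|y| < |x| ∧ x * y < 0)) :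
    |y| < |x + 3 * y| ∧ 0 ≤ (x + 3 * y) * y := by
  rw [mul_neg_iff] at h
  rw [mul_nonneg_iff]
  grind

lemma abs_lt_abs_sub_three_mul {x y : ℤ} (h0 : x ≠ 0 ∨ y ≠ 0) (h : ¬(|y| < |x| ∧ 0 ≤ x * y)) :
    |y| < |x - 3 * y| ∧ (x - 3 * y) * y < 0 := by
  rw [mul_nonneg_iff] at h
  rw [mul_neg_iff]
  grind

abbrev NonzeroVector := SubMulAction.nonzero SL(2, ℤ) (Fin 2 → ℤ)

def dominant (i : Bool) : Set NonzeroVector := {v | |trail i v| < |lead i v|}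

def attractor (i : Bool) : Set NonzeroVector := dominant i ∩ {v | 0 ≤ lead i v * trail i v}

def invAttractor (i : Bool) : Set NonzeroVector := dominant i ∩ {v | lead i v * trail i v < 0}

lemma pairwise_disjoint_dominant : Pairwise fun i j => Disjoint (dominant i) (dominant j) :=
  fun _ _ hij => Set.disjoint_left.mpr fun v hvi hvj => not_dominant_and_dominant hij v ⟨hvi, hvj⟩

theorem injective_lift_gen : Function.Injective (FreeGroup.lift gen) := by
  have inter_disjoint {s t : Set NonzeroVector} {i j : Bool} (hij : i ≠ j) :
      Disjoint (dominant i ∩ s) (dominant j ∩ t) :=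
    (pairwise_disjoint_dominant hij).mono Set.inter_subset_left Set.inter_subset_left
  refine FreeGroup.injective_lift_of_ping_pong gen attractor invAttractor (fun i => ?_)
    (fun _ _ => inter_disjoint) (fun _ _ => inter_disjoint) (fun i j => ?_)
    (fun i => Set.smul_set_subset_iff.mpr fun v hv => ?_)
    (fun i => Set.smul_set_subset_iff.mpr fun v hv => ?_)
  · cases i
    · exact ⟨⟨![0, 1], by simp⟩, by simp [attractor, dominant, lead, trail]⟩
    · exact ⟨⟨![1, 0], by simp⟩, by simp [attractor, dominant, lead, trail]⟩
  · by_cases hij : i = j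
    · subst hij
      exact Set.disjoint_left.mpr fun v hX hY =>
        (show lead i v * trail i v < 0 from hY.2).not_ge hX.2
    · exact inter_disjoint hij
  · have := abs_lt_abs_add_three_mul (lead_ne_zero_or_trail_ne_zero i v.2) hv
    simpa [attractor, dominant, lead_gen_smul, trail_gen_smul] using this
  · have := abs_lt_abs_sub_three_mul (lead_ne_zero_or_trail_ne_zero i v.2) hv
    simpa [invAttractor, dominant, lead_gen_inv_smul, trail_gen_inv_smul] using this

end Sanov

instance : Group.ResiduallyFinite (FreeGroup Bool) :=
  .of_injective Sanov.injective_lift_gen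

theorem FreeGroup.commute_of_subsingleton {α : Type*} [Subsingleton α] (u v : FreeGroup α) :
    Commute u v := by
  cases isEmpty_or_nonempty α
  · exact Subsingleton.elim (u * v) (v * u)
  · have : Unique α := uniqueOfSubsingleton (Classical.arbitrary α)
    exact IsCyclic.commGroup.mul_comm u v

theorem FreeGroup.not_commute_of_ne {α : Type*} {s t : α} (h : s ≠ t) :
    ¬Commute (of s) (of t) := by
  classical
  intro hc
  simpa [toWord_mul, h] using congrArg toWord hc.eq

theorem FreeGroup.surjective_lift_of_ne {α : Type*} [DecidableEq α] {i j : α} (hij : i ≠ j) :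
    Function.Surjective
      (lift fun k => if k = i then of true else if k = j then of false else 1) := by
  have hsection : (lift fun k => if k = i then of true else if k = j then of false else 1).comp
      (lift fun t : Bool => if t then of i else of j) = MonoidHom.id _ :=
    ext_hom _ _ fun t => by cases t <;> simp [hij.symm]
  exact Function.LeftInverse.surjective (DFunLike.congr_fun hsection)

theorem IsFreeGroup.injective_lift_of_not_commute {G : Type*} [Group G] [IsFreeGroup G] {x y : G}
    (hxy : ¬Commute x y) :
    Function.Injective (FreeGroup.lift fun i : Bool => if i then x else y) := by
  classical
  set φ := FreeGroup.lift fun i : Bool => if i then x else y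
  obtain ⟨ι, ⟨b⟩⟩ := IsFreeGroup.nonempty_basis (G := φ.range)
  have hι : Nontrivial ι := by
    by_contra h
    rw [not_nontrivial_iff_subsingleton] at h
    have hx : x ∈ φ.range := ⟨FreeGroup.of true, by simp [φ]⟩
    have hy : y ∈ φ.range := ⟨FreeGroup.of false, by simp [φ]⟩
    apply hxy
    have := ((FreeGroup.commute_of_subsingleton (b.repr ⟨x, hx⟩) (b.repr ⟨y, hy⟩)).map
      b.repr.symm).map φ.range.subtype
    simpa using this
  obtain ⟨i, j, hij⟩ := exists_pair_ne ι
  set π : FreeGroup ι →* FreeGroup Bool :=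
    FreeGroup.lift fun k => if k = i then .of true else if k = j then .of false else 1
  have hsurj : Function.Surjective (π.comp (b.repr.toMonoidHom.comp φ.rangeRestrict)) :=
    (FreeGroup.surjective_lift_of_ne hij).comp (b.repr.surjective.comp φ.rangeRestrict_surjective)
  rw [← φ.rangeRestrict_injective_iff]
  have hinj := Group.ResiduallyFinite.injective_of_surjective hsurj
  rw [MonoidHom.coe_comp, MonoidHom.coe_comp] at hinj
  exact hinj.of_comp.of_comp

namespace Lgroup

variable {α ι G : Type*} [Group G]

def mulTerm (s t : Lgroup.Term α) : Lgroup.Term α :=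
  Term.func (GroupFunc.mul : Lgroup.Functions 2) ![s, t]

def invTerm (s : Lgroup.Term α) : Lgroup.Term α :=
  Term.func (GroupFunc.inv : Lgroup.Functions 1) ![s]

def oneTerm : Lgroup.Term α :=
  Term.func (GroupFunc.one : Lgroup.Functions 0) ![]

def wordTerm [DecidableEq ι] (x : ι → Lgroup.Term α) (w : FreeGroup ι) : Lgroup.Term α :=
  (w.toWord.map fun p => bif p.2 then x p.1 else invTerm (x p.1)).foldr mulTerm oneTerm

@[simp] lemma realize_mulTerm (v : α → G) (s t : Lgroup.Term α) :
    (mulTerm s t).realize v = s.realize v * t.realize v := rfl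

@[simp] lemma realize_invTerm (v : α → G) (s : Lgroup.Term α) :
    (invTerm s).realize v = (s.realize v)⁻¹ := rfl

@[simp] lemma realize_oneTerm (v : α → G) : (oneTerm : Lgroup.Term α).realize v = 1 := rfl

@[simp] lemma realize_wordTerm [DecidableEq ι] (v : α → G) (x : ι → Lgroup.Term α)
    (w : FreeGroup ι) :
    (wordTerm x w).realize v = FreeGroup.lift (fun i => (x i).realize v) w := by
  conv_rhs => rw [← FreeGroup.mk_toWord (x := w), FreeGroup.lift_mk]
  rw [wordTerm]
  induction w.toWord with
  | nil => rfl
  | cons p L ih => cases p with | mk i b => cases b <;> simp [ih]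

def var (i : Bool) : Lgroup.Term (Empty ⊕ Bool) := Term.var (Sum.inr i)

def commuteFormula : Lgroup.Formula (Empty ⊕ Bool) :=
  (mulTerm (var true) (var false)).equal (mulTerm (var false) (var true))

noncomputable def relatorCommuteSentence (w : FreeGroup Bool) : Lgroup.Sentence :=
  Formula.iAlls Bool (((wordTerm var w).equal oneTerm).imp commuteFormula)

noncomputable def nonabelianSentence : Lgroup.Sentence := Formula.iExs Bool commuteFormula.not

@[simp] lemma realize_var (v : Empty → G) (x : Bool → G) (i : Bool) :
    (var i).realize (Sum.elim v x) = x i := rfl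

lemma realize_relatorCommuteSentence (w : FreeGroup Bool) :
    G ⊨ relatorCommuteSentence w ↔
      ∀ a b : G, FreeGroup.lift (fun i => if i then a else b) w = 1 → Commute a b := by
  simp only [relatorCommuteSentence, commuteFormula, Sentence.Realize, Formula.realize_iAlls,
    Formula.realize_imp, Formula.realize_equal, realize_wordTerm, realize_mulTerm, realize_oneTerm,
    realize_var]
  refine ⟨fun h a b => h _, fun h x => ?_⟩
  have hx : x = fun i => if i then x true else x false := funext fun i => by cases i <;> rfl
  rw [hx]
  exact h _ _

lemma realize_nonabelianSentence : G ⊨ nonabelianSentence ↔ ∃ a b : G, ¬Commute a b := by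
  simp only [nonabelianSentence, commuteFormula, Sentence.Realize, Formula.realize_iExs,
    Formula.realize_not, Formula.realize_equal, realize_mulTerm, realize_var]
  exact ⟨fun ⟨x, hx⟩ => ⟨x true, x false, hx⟩,
    fun ⟨a, b, hab⟩ => ⟨fun i => if i then a else b, hab⟩⟩

end Lgroup

/-- Every group elementarily equivalent to a nonabelian free group contains a free
subgroup of rank 2; in particular it is nonabelian. -/
theorem free_subgroup_of_elementarilyEquivalent_free {S : Type*} (hS : ∃ a b : S, a ≠ b)
    {M : Type*} [Group M] (h : M ≅[Lgroup] FreeGroup S) :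
    (∃ a b : M, Function.Injective
      (FreeGroup.lift (fun i : Bool => if i then a else b) : FreeGroup Bool →* M)) ∧
    ∃ a b : M, a * b ≠ b * a := by
  obtain ⟨s, t, hst⟩ := hS
  obtain ⟨a, b, hab⟩ : ∃ a b : M, ¬Commute a b := by
    rw [← Lgroup.realize_nonabelianSentence, h.realize_sentence, Lgroup.realize_nonabelianSentence]
    exact ⟨_, _, FreeGroup.not_commute_of_ne hst⟩
  refine ⟨⟨a, b, (injective_iff_map_eq_one _).mpr fun w hw => by_contra fun hw1 => hab ?_⟩,
    a, b, hab⟩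
  have hF : FreeGroup S ⊨ Lgroup.relatorCommuteSentence w :=
    (Lgroup.realize_relatorCommuteSentence w).mpr fun x y hxy => by_contra fun hxy' =>
      hw1 (IsFreeGroup.injective_lift_of_not_commute hxy' (hxy.trans (map_one _).symm))
  exact (Lgroup.realize_relatorCommuteSentence w).mp ((h.realize_sentence _).mpr hF) a b hw
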